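/- arXiv:1911.05606 — 4 statements merged into one kernel-verified Lean document; each statement's English description precedes it below -/
import Mathlib

section
/- Let X_1,...,X_m be jointly distributed random variables each with mean \mu and variance \sigma^2. Then the k-th order statistic satisfies E[X_{k:m}] \geq \mu - \sigma \sqrt{(m-k)/k}. -/
/-!
If `X_{k:m} < t`, then at least `k` of the `Xᵢ` lie below `t`, so pointwise
`k (t - X_{k:m})⁺ ≤ ∑ᵢ (t - Xᵢ)⁺`. Since `(t - X_{k:m})⁺ ≥ t - X_{k:m}`, taking expectations gives
`k (t - E[X_{k:m}]) ≤ ∑ᵢ E[(t - Xᵢ)⁺]`, and `E[Z⁺] = (E Z + E|Z|) / 2 ≤ (E Z + √(E Z²)) / 2` bounds each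
term by `(s + √(σ² + s²)) / 2` with `s = t - μ₀`. Writing `m / k = 1 + r²` with `r = √((m - k) / k)`,
the choice `s = σ (r⁻¹ - r) / 2` minimises the resulting bound and yields `E[X_{k:m}] ≥ μ₀ - σ r`.
For `k = m` this threshold degenerates; there `X_{m:m} ≥ X₁` suffices.
-/

open MeasureTheory

/-- The `k`-th order statistic (the `k`-th smallest value) of the finite family `x`. -/
noncomputable def orderStat {m : ℕ} (x : Fin m → ℝ) (k : ℕ) : ℝ :=
  (Multiset.sort (Multiset.ofList (List.ofFn x)) (· ≤ ·)).getD (k - 1) 0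

open ProbabilityTheory

section OrderStatistics

variable {m : ℕ} (x : Fin m → ℝ)

noncomputable def sortedValues : List ℝ :=
  Multiset.sort (Multiset.ofList (List.ofFn x)) (· ≤ ·)

lemma sortedValues_perm : (sortedValues x).Perm (List.ofFn x) :=
  Multiset.coe_eq_coe.mp (Multiset.sort_eq _ _)

lemma length_sortedValues : (sortedValues x).length = m := by
  simp [(sortedValues_perm x).length_eq]

lemma sortedLE_sortedValues : (sortedValues x).SortedLE :=
  (Multiset.pairwise_sort _ _).sortedLE

variable {x} {k : ℕ}

lemma le_orderStat_of_mem_take (hk1 : 1 ≤ k) (hkm : k ≤ m) {a : ℝ}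
    (ha : a ∈ (sortedValues x).take k) : a ≤ orderStat x k := by
  have hk : k - 1 < (sortedValues x).length := by rw [length_sortedValues]; omega
  obtain ⟨j, hj, rfl⟩ := List.getElem_of_mem ha
  rw [List.length_take] at hj
  rw [List.getElem_take, orderStat, ← sortedValues, List.getD_eq_getElem _ _ hk]
  exact (sortedLE_sortedValues x).getElem_le_getElem_of_le (by omega)

lemma le_orderStat_self (i : Fin m) : x i ≤ orderStat x m := by
  refine le_orderStat_of_mem_take i.pos le_rfl ?_
  rw [List.take_of_length_le (length_sortedValues x).le, (sortedValues_perm x).mem_iff]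
  exact List.mem_ofFn.mpr ⟨i, rfl⟩

lemma natCast_mul_apply_orderStat_le_sum {g : ℝ → ℝ} (hg : Antitone g) (hg0 : 0 ≤ g)
    (hk1 : 1 ≤ k) (hkm : k ≤ m) : k * g (orderStat x k) ≤ ∑ i, g (x i) := by
  set l := sortedValues x
  have hsum : ∑ i, g (x i) = (l.map g).sum := by
    rw [← List.sum_ofFn, ((sortedValues_perm x).map g).sum_eq, List.map_ofFn]
    rfl
  have htake : k * g (orderStat x k) ≤ ((l.take k).map g).sum := by
    have := List.card_nsmul_le_sum ((l.take k).map g) (g (orderStat x k)) (by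
      simp only [List.mem_map]
      rintro _ ⟨a, ha, rfl⟩
      exact hg (le_orderStat_of_mem_take hk1 hkm ha))
    simpa [l, length_sortedValues, hkm] using this
  have hdrop : 0 ≤ ((l.drop k).map g).sum :=
    List.sum_nonneg (by simp only [List.mem_map]; rintro _ ⟨a, -, rfl⟩; exact hg0 a)
  rw [hsum, ← List.take_append_drop k l, List.map_append, List.sum_append]
  linarith

end OrderStatistics

section Expectation

variable {Ω : Type*} [MeasurableSpace Ω] {μ : Measure Ω} [IsProbabilityMeasure μ]

lemma integral_abs_le_sqrt_integral_sq {Z : Ω → ℝ} (hZ : MemLp Z 2 μ) :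
    ∫ ω, |Z ω| ∂μ ≤ √(∫ ω, Z ω ^ 2 ∂μ) := by
  have h := variance_nonneg |Z| μ
  rw [variance_eq_sub hZ.abs] at h
  simp only [Pi.pow_apply, Pi.abs_apply, sq_abs, sub_nonneg] at h
  exact Real.le_sqrt_of_sq_le h

lemma integral_max_zero_le {Z : Ω → ℝ} (hZ : MemLp Z 2 μ) :
    ∫ ω, max (Z ω) 0 ∂μ ≤ (∫ ω, Z ω ∂μ + √(∫ ω, Z ω ^ 2 ∂μ)) / 2 := by
  have hZ1 : Integrable Z μ := hZ.integrable one_le_two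
  have hmax : (fun ω => max (Z ω) 0) = fun ω => (Z ω + |Z ω|) / 2 := by
    funext ω
    rcases le_total (Z ω) 0 with h | h
    · rw [max_eq_right h, abs_of_nonpos h]; ring
    · rw [max_eq_left h, abs_of_nonneg h]; ring
  rw [hmax, integral_div, integral_add hZ1 hZ1.abs]
  linarith [integral_abs_le_sqrt_integral_sq hZ]

lemma integral_max_const_sub_le {X : Ω → ℝ} (hX : MemLp X 2 μ) (t : ℝ) :
    ∫ ω, max (t - X ω) 0 ∂μ ≤ (t - μ[X] + √(Var[X; μ] + (t - μ[X]) ^ 2)) / 2 := by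
  have hZ : MemLp (fun ω => t - X ω) 2 μ := (memLp_const t).sub hX
  have hmean : ∫ ω, (t - X ω) ∂μ = t - μ[X] := by
    rw [integral_sub (integrable_const t) (hX.integrable one_le_two)]
    simp
  have hsq : ∫ ω, (t - X ω) ^ 2 ∂μ = Var[X; μ] + (t - μ[X]) ^ 2 := by
    have := variance_eq_sub hZ
    rw [variance_const_sub hX.aestronglyMeasurable, hmean] at this
    simp only [Pi.pow_apply] at this
    linarith
  simpa only [hmean, hsq] using integral_max_zero_le hZ

lemma natCast_mul_sub_integral_orderStat_le {m k : ℕ} (hk1 : 1 ≤ k) (hkm : k ≤ m)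
    {X : Fin m → Ω → ℝ} (hX : ∀ i, Integrable (X i) μ)
    (hXk : Integrable (fun ω => orderStat (fun i => X i ω) k) μ) (t : ℝ) :
    k * (t - ∫ ω, orderStat (fun i => X i ω) k ∂μ) ≤ ∑ i, ∫ ω, max (t - X i ω) 0 ∂μ := by
  have hpos : ∀ {Y : Ω → ℝ}, Integrable Y μ → Integrable (fun ω => max (t - Y ω) 0) μ :=
    fun hY => ((integrable_const t).sub hY).pos_part
  have hgap : t - ∫ ω, orderStat (fun i => X i ω) k ∂μ
      ≤ ∫ ω, max (t - orderStat (fun i => X i ω) k) 0 ∂μ :=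
    calc _ = ∫ ω, (t - orderStat (fun i => X i ω) k) ∂μ := by
          rw [integral_sub (integrable_const t) hXk]; simp
      _ ≤ _ := integral_mono ((integrable_const t).sub hXk) (hpos hXk) fun ω => le_max_left _ _
  calc _ ≤ k * ∫ ω, max (t - orderStat (fun i => X i ω) k) 0 ∂μ := by gcongr
    _ = ∫ ω, k * max (t - orderStat (fun i => X i ω) k) 0 ∂μ := (integral_const_mul _ _).symm
    _ ≤ ∫ ω, ∑ i, max (t - X i ω) 0 ∂μ :=
        integral_mono ((hpos hXk).const_mul _) (integrable_finsetSum _ fun i _ => hpos (hX i))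
          fun ω => natCast_mul_apply_orderStat_le_sum (g := fun a => max (t - a) 0)
            (fun _ _ hab => max_le_max (by linarith) le_rfl) (fun _ => le_max_right _ _) hk1 hkm
    _ = _ := integral_finsetSum _ fun i _ => hpos (hX i)

end Expectation

lemma sub_one_add_sq_mul_add_sqrt_eq {σ r : ℝ} (hσ : 0 ≤ σ) (hr : 0 < r) :
    let s := σ * (r⁻¹ - r) / 2
    s - (1 + r ^ 2) * (s + √(σ ^ 2 + s ^ 2)) / 2 = -(σ * r) := by
  intro s
  have hsqrt : √(σ ^ 2 + s ^ 2) = σ * (r⁻¹ + r) / 2 := by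
    rw [show σ ^ 2 + s ^ 2 = (σ * (r⁻¹ + r) / 2) ^ 2 by simp only [s]; field_simp; ring]
    exact Real.sqrt_sq (by positivity)
  rw [hsqrt]
  simp only [s]
  field_simp
  ring

theorem orderStat_expectation_lower_bound_general {Ω : Type*} [MeasurableSpace Ω]
    (μ : Measure Ω) [IsProbabilityMeasure μ]
    (m : ℕ) (X : Fin m → Ω → ℝ) (μ₀ σ : ℝ) (hσ : 0 ≤ σ)
    (k : ℕ) (hk1 : 1 ≤ k) (hkm : k ≤ m)
    (hint : ∀ i, Integrable (X i) μ)
    (hint2 : ∀ i, Integrable (fun ω => (X i ω) ^ 2) μ)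
    (hmean : ∀ i, ∫ ω, X i ω ∂μ = μ₀)
    (hvar : ∀ i, ∫ ω, (X i ω - μ₀) ^ 2 ∂μ = σ ^ 2)
    (hintOS : Integrable (fun ω => orderStat (fun i => X i ω) k) μ) :
    μ₀ - σ * Real.sqrt (((m : ℝ) - k) / k) ≤ ∫ ω, orderStat (fun i => X i ω) k ∂μ := by
  rcases hkm.eq_or_lt with rfl | hkm
  · calc μ₀ - σ * √(((k : ℝ) - k) / k) = ∫ ω, X ⟨0, hk1⟩ ω ∂μ := by simp [hmean]
      _ ≤ _ := integral_mono (hint _) hintOS fun ω => le_orderStat_self (x := fun i => X i ω) _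
  have hk : (0 : ℝ) < k := by exact_mod_cast hk1
  have hmk : (0 : ℝ) < (m - k) / k := div_pos (by simpa using hkm) hk
  set r := √(((m : ℝ) - k) / k)
  have hm : (m : ℝ) = k * (1 + r ^ 2) := by
    rw [Real.sq_sqrt hmk.le]
    field_simp
    ring
  set s := σ * (r⁻¹ - r) / 2
  have hposPart : ∀ i, ∫ ω, max (μ₀ + s - X i ω) 0 ∂μ ≤ (s + √(σ ^ 2 + s ^ 2)) / 2 := fun i => by
    have hX2 : MemLp (X i) 2 μ :=
      (memLp_two_iff_integrable_sq (hint i).aestronglyMeasurable).2 (hint2 i)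
    have hVar : Var[X i; μ] = σ ^ 2 := by
      rw [variance_eq_integral (hint i).aemeasurable, hmean i, hvar i]
    simpa [hmean, hVar] using integral_max_const_sub_le hX2 (μ₀ + s)
  have hopt : s - (1 + r ^ 2) * (s + √(σ ^ 2 + s ^ 2)) / 2 = -(σ * r) :=
    sub_one_add_sq_mul_add_sqrt_eq hσ (Real.sqrt_pos.2 hmk)
  have hgap : k * (μ₀ + s - ∫ ω, orderStat (fun i => X i ω) k ∂μ)
      ≤ k * ((1 + r ^ 2) * (s + √(σ ^ 2 + s ^ 2)) / 2) :=
    calc _ ≤ ∑ i, ∫ ω, max (μ₀ + s - X i ω) 0 ∂μ :=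
          natCast_mul_sub_integral_orderStat_le hk1 hkm.le hint hintOS (μ₀ + s)
      _ ≤ ∑ _i : Fin m, (s + √(σ ^ 2 + s ^ 2)) / 2 := Finset.sum_le_sum fun i _ => hposPart i
      _ = _ := by simp [hm]; ring
  linarith [le_of_mul_le_mul_left hgap hk]

/-- Lower bound on the expectation of the `k`-th order statistic of `m` jointly
distributed random variables with common mean `μ₀` and common variance `σ²`:
`E[X_{k:m}] ≥ μ₀ - σ √((m-k)/k)`. -/
theorem orderStat_expectation_lower_bound {Ω : Type*} [MeasurableSpace Ω]
    (μ : Measure Ω) [IsProbabilityMeasure μ]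
    (m : ℕ) (X : Fin m → Ω → ℝ) (μ₀ σ : ℝ) (hσ : 0 ≤ σ)
    (k : ℕ) (hk1 : 1 ≤ k) (hkm : k ≤ m)
    (hmeas : ∀ i, Measurable (X i))
    (hint : ∀ i, Integrable (X i) μ)
    (hint2 : ∀ i, Integrable (fun ω => (X i ω) ^ 2) μ)
    (hmean : ∀ i, ∫ ω, X i ω ∂μ = μ₀)
    (hvar : ∀ i, ∫ ω, (X i ω - μ₀) ^ 2 ∂μ = σ ^ 2)
    (hintOS : Integrable (fun ω => orderStat (fun i => X i ω) k) μ) :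
    μ₀ - σ * Real.sqrt (((m : ℝ) - k) / k) ≤ ∫ ω, orderStat (fun i => X i ω) k ∂μ :=
  orderStat_expectation_lower_bound_general μ m X μ₀ σ hσ k hk1 hkm hint hint2 hmean hvar hintOS
end

section
/- Let \hat{G} \in G(G,p) with Laplacian L, and let \ell be uniform over the n-1 nontrivial eigenvalues of L (conditionally on \hat{G}). Then Var(\ell) = p/(n-1)^2 * [ (n-1)(2m(2-p) + p \sum_{i=1}^n d_i^2) - 4m^2 p ]. -/
open MeasureTheory ProbabilityTheory Finset SimpleGraph
attribute [local instance] Classical.propDecidable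

/-- The eigenvalues of a real symmetric matrix, sorted in increasing order. -/
noncomputable def sortedEigs {n : ℕ} (A : Matrix (Fin n) (Fin n) ℝ) : List ℝ :=
  if hA : A.IsHermitian then
    Multiset.sort (Multiset.ofList (List.ofFn hA.eigenvalues)) (· ≤ ·)
  else []

/-- `eig A i` is the `i`-th smallest eigenvalue `λ_i(A)` (1-indexed). -/
noncomputable def eig {n : ℕ} (A : Matrix (Fin n) (Fin n) ℝ) (i : ℕ) : ℝ :=
  (sortedEigs A).getD (i - 1) 0

/-!
The nontrivial eigenvalues of `L` are all its eigenvalues except `λ₁ = 0`, so their sum and their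
sum of squares are `tr L = ∑ dᵥ(Ĝ)` and `tr L² = ∑ dᵥ(Ĝ)² + ∑ dᵥ(Ĝ)`. Each degree `dᵥ(Ĝ)` counts
which of the `dᵥ` pairwise independent edge events at `v`, each of probability `p`, occur, so
`E dᵥ(Ĝ) = p dᵥ` and `E dᵥ(Ĝ)² = p (1 - p) dᵥ + p² dᵥ²`; summing over `v` with `∑ dᵥ = 2m` gives
both moments of `ℓ`.
-/

theorem List.sum_range_map_getD {α M : Type*} [AddCommMonoid M] (l : List α) (d : α)
    (f : α → M) : ∑ i ∈ Finset.range l.length, f (l.getD i d) = (l.map f).sum := by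
  induction l with
  | nil => simp
  | cons a l ih => rw [List.length_cons, Finset.sum_range_succ']; simp [← ih, add_comm]

namespace Matrix.IsHermitian

lemma trace_pow_eq_sum_eigenvalues_pow {n 𝕜 : Type*} [RCLike 𝕜] [Fintype n] [DecidableEq n]
    {A : Matrix n n 𝕜} (hA : A.IsHermitian) (k : ℕ) :
    (A ^ k).trace = ∑ i, (hA.eigenvalues i : 𝕜) ^ k := by
  conv_lhs => rw [hA.spectral_theorem, ← map_pow, Unitary.conjStarAlgAut_apply,
    Matrix.trace_mul_cycle, Unitary.coe_star_mul_self, Matrix.one_mul, Matrix.diagonal_pow,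
    Matrix.trace_diagonal]
  simp

end Matrix.IsHermitian

lemma sortedEigs_perm {n : ℕ} {A : Matrix (Fin n) (Fin n) ℝ} (hA : A.IsHermitian) :
    (sortedEigs A).Perm (List.ofFn hA.eigenvalues) := by
  rw [← Multiset.coe_eq_coe, sortedEigs, dif_pos hA, Multiset.sort_eq]

lemma length_sortedEigs {n : ℕ} {A : Matrix (Fin n) (Fin n) ℝ} (hA : A.IsHermitian) :
    (sortedEigs A).length = n := by
  simpa using (sortedEigs_perm hA).length_eq

lemma sum_Icc_eig {n : ℕ} {A : Matrix (Fin n) (Fin n) ℝ} (hA : A.IsHermitian) (f : ℝ → ℝ) :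
    ∑ i ∈ Icc 1 n, f (eig A i) = ∑ i, f (hA.eigenvalues i) := by
  have hsum : ∑ i, f (hA.eigenvalues i) = ((sortedEigs A).map f).sum := by
    rw [((sortedEigs_perm hA).map f).sum_eq, List.map_ofFn, List.sum_ofFn, Function.comp_def]
  rw [hsum, ← List.sum_range_map_getD _ 0, length_sortedEigs hA, ← Ico_add_one_right_eq_Icc,
    sum_Ico_eq_sum_range]
  simp [eig, add_comm 1]

lemma eig_one_eq_zero {n : ℕ} {A : Matrix (Fin n) (Fin n) ℝ} (hA : A.PosSemidef)
    (hdet : A.det = 0) : eig A 1 = 0 := by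
  have hperm := sortedEigs_perm hA.isHermitian
  have hzero : (0 : ℝ) ∈ sortedEigs A := by
    rw [hA.isHermitian.det_eq_prod_eigenvalues] at hdet
    obtain ⟨i, -, hi⟩ := prod_eq_zero_iff.mp hdet
    exact hperm.mem_iff.mpr (List.mem_ofFn.mpr ⟨i, by exact_mod_cast hi⟩)
  have hsorted : (sortedEigs A).Pairwise (· ≤ ·) := by
    rw [sortedEigs, dif_pos hA.isHermitian]; exact Multiset.pairwise_sort _ _
  rcases hl : sortedEigs A with _ | ⟨a, t⟩
  · simp [hl] at hzero
  · rw [hl] at hzero hsorted hperm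
    have ha : 0 ≤ a := by
      obtain ⟨i, rfl⟩ := List.mem_ofFn.mp (hperm.mem_iff.mp List.mem_cons_self)
      exact hA.eigenvalues_nonneg i
    rw [eig, hl]
    show a = 0
    rcases List.mem_cons.mp hzero with h | h
    · exact h.symm
    · linarith [List.rel_of_pairwise_cons hsorted h]

lemma sum_Icc_two_eig_pow {n : ℕ} {A : Matrix (Fin n) (Fin n) ℝ} (hA : A.IsHermitian) {k : ℕ}
    (hk : k ≠ 0) (h1 : eig A 1 = 0) : ∑ i ∈ Icc 2 n, eig A i ^ k = (A ^ k).trace := by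
  rw [hA.trace_pow_eq_sum_eigenvalues_pow]
  simp only [RCLike.ofReal_real_eq_id, id]
  rw [← sum_Icc_eig hA (· ^ k)]
  refine sum_subset (Icc_subset_Icc_left one_le_two) fun i hi hi2 => ?_
  obtain rfl : i = 1 := by simp only [mem_Icc] at hi hi2; omega
  simp [h1, hk]

namespace SimpleGraph

variable {V : Type*} [Fintype V] [DecidableEq V] (K : SimpleGraph V) [DecidableRel K.Adj]

lemma trace_lapMatrix (R : Type*) [Ring R] :
    (K.lapMatrix R).trace = ∑ v, (K.degree v : R) := by
  simp [lapMatrix, degMatrix, Matrix.trace_sub]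

lemma trace_lapMatrix_sq (R : Type*) [CommRing R] :
    ((K.lapMatrix R) ^ 2).trace = ∑ v, (K.degree v : R) ^ 2 + ∑ v, (K.degree v : R) := by
  have hDA : (K.degMatrix R * K.adjMatrix R).trace = 0 := by
    simp only [Matrix.trace, Matrix.diag, degMatrix, Matrix.diagonal_mul, adjMatrix_apply,
      K.irrefl, if_false, mul_zero, sum_const_zero]
  have hAA : (K.adjMatrix R * K.adjMatrix R).trace = ∑ v, (K.degree v : R) := by
    simp only [Matrix.trace, Matrix.diag, adjMatrix_mul_self_apply_self]
  have hDD : (K.degMatrix R * K.degMatrix R).trace = ∑ v, (K.degree v : R) ^ 2 := by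
    simp [degMatrix, Matrix.diagonal_mul_diagonal, sq]
  rw [lapMatrix, sq, Matrix.sub_mul, Matrix.mul_sub, Matrix.mul_sub, Matrix.trace_sub,
    Matrix.trace_sub, Matrix.trace_sub, Matrix.trace_mul_comm (K.adjMatrix R), hDA, hAA, hDD]
  abel

end SimpleGraph

lemma eig_one_lapMatrix {n : ℕ} (K : SimpleGraph (Fin n)) : eig (K.lapMatrix ℝ) 1 = 0 := by
  rcases n with _ | n
  · simp [eig, List.eq_nil_of_length_eq_zero (length_sortedEigs (K.isHermitian_lapMatrix ℝ))]
  · exact eig_one_eq_zero (posSemidef_lapMatrix ℝ K) K.det_lapMatrix_eq_zero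

lemma sum_Icc_two_eig_lapMatrix {n : ℕ} (K : SimpleGraph (Fin n)) :
    ∑ i ∈ Icc 2 n, eig (K.lapMatrix ℝ) i = ∑ v, (K.degree v : ℝ) := by
  simpa [trace_lapMatrix] using
    sum_Icc_two_eig_pow (K.isHermitian_lapMatrix ℝ) one_ne_zero (eig_one_lapMatrix K)

lemma sum_Icc_two_eig_sq_lapMatrix {n : ℕ} (K : SimpleGraph (Fin n)) :
    ∑ i ∈ Icc 2 n, eig (K.lapMatrix ℝ) i ^ 2
      = ∑ v, (K.degree v : ℝ) ^ 2 + ∑ v, (K.degree v : ℝ) := by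
  rw [sum_Icc_two_eig_pow (K.isHermitian_lapMatrix ℝ) two_ne_zero (eig_one_lapMatrix K),
    trace_lapMatrix_sq]

lemma natCast_card_filter_mem_eq_sum_indicator {Ω ι : Type*} (s : Finset ι) (A : ι → Set Ω)
    (ω : Ω) :
    (#{i ∈ s | ω ∈ A i} : ℝ) = ∑ i ∈ s, (A i).indicator 1 ω := by
  simp only [natCast_card_filter, Set.indicator_apply, Pi.one_apply]

section CountOfEvents

variable {Ω ι : Type*} [MeasurableSpace Ω] {μ : Measure Ω} [IsFiniteMeasure μ]
  {A : ι → Set Ω} {s : Finset ι} {p : ℝ}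

lemma integral_card_filter_mem (hA : ∀ i ∈ s, MeasurableSet (A i))
    (hp : ∀ i ∈ s, μ.real (A i) = p) :
    ∫ ω, (#{i ∈ s | ω ∈ A i} : ℝ) ∂μ = p * #s := by
  simp_rw [natCast_card_filter_mem_eq_sum_indicator]
  rw [integral_finsetSum _ fun i hi => (integrable_const 1).indicator (hA i hi)]
  rw [sum_congr rfl fun i hi => (integral_indicator_one (hA i hi)).trans (hp i hi)]
  simp [mul_comm]

lemma integral_card_filter_mem_sq (hA : ∀ i ∈ s, MeasurableSet (A i))
    (hp : ∀ i ∈ s, μ.real (A i) = p)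
    (hpair : ∀ i ∈ s, ∀ j ∈ s, i ≠ j → μ.real (A i ∩ A j) = μ.real (A i) * μ.real (A j)) :
    ∫ ω, (#{i ∈ s | ω ∈ A i} : ℝ) ^ 2 ∂μ = p * (1 - p) * #s + p ^ 2 * #s ^ 2 := by
  have hrow : ∀ i ∈ s, ∑ j ∈ s, μ.real (A i ∩ A j) = p + (#s - 1) * p ^ 2 := by
    intro i hi
    rw [← add_sum_erase s _ hi, Set.inter_self, hp i hi,
      sum_congr rfl fun j hj => by
        rw [hpair i hi j (mem_of_mem_erase hj) (ne_of_mem_erase hj).symm,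
          hp i hi, hp j (mem_of_mem_erase hj)],
      sum_const, nsmul_eq_mul, cast_card_erase_of_mem hi]
    ring
  have hmeas : ∀ i ∈ s, ∀ j ∈ s, MeasurableSet (A i ∩ A j) :=
    fun i hi j hj => (hA i hi).inter (hA j hj)
  have hprod : ∀ i j ω, (A i).indicator (1 : Ω → ℝ) ω * (A j).indicator 1 ω
      = (A i ∩ A j).indicator 1 ω := fun i j ω => by
    rw [Set.inter_indicator_one, Pi.mul_apply]
  simp_rw [natCast_card_filter_mem_eq_sum_indicator, sq, sum_mul_sum, hprod]
  rw [integral_finsetSum _ fun i hi => integrable_finsetSum _ fun j hj =>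
      (integrable_const 1).indicator (hmeas i hi j hj)]
  rw [sum_congr rfl fun i hi => (integral_finsetSum _ fun j hj =>
      (integrable_const 1).indicator (hmeas i hi j hj)).trans
    (sum_congr rfl fun j hj => integral_indicator_one (hmeas i hi j hj))]
  rw [sum_congr rfl hrow, sum_const, nsmul_eq_mul]
  ring

end CountOfEvents

lemma ProbabilityTheory.iIndepSet.measureReal_inter {Ω ι : Type*} [MeasurableSpace Ω]
    {μ : Measure Ω} {f : ι → Set Ω} (h : iIndepSet f μ) {i j : ι} (hij : i ≠ j) :
    μ.real (f i ∩ f j) = μ.real (f i) * μ.real (f j) := by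
  have := h.meas_biInter {i, j}
  rw [set_biInter_insert, set_biInter_singleton, prod_pair hij] at this
  simp [measureReal_def, this]

lemma SimpleGraph.degree_eq_card_filter_adj_of_le {V : Type*} {G H : SimpleGraph V} (h : H ≤ G)
    (v : V) [Fintype (G.neighborSet v)] [Fintype (H.neighborSet v)] :
    H.degree v = #{u ∈ G.neighborFinset v | H.Adj v u} := by
  rw [← card_neighborFinset_eq_degree]
  congr 1
  ext u
  simpa using fun huv => h huv

section RandomSubgraph

variable {Ω V : Type*} [MeasurableSpace Ω] [MeasurableSingletonClass Ω] [Finite Ω]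
  {μ : Measure Ω} [IsFiniteMeasure μ] [Fintype V] {G : SimpleGraph V}
  {H : Ω → SimpleGraph V} {p : ℝ}

lemma integral_degree (hsub : ∀ ω, H ω ≤ G)
    (hedge : ∀ e ∈ G.edgeSet, (μ {ω | e ∈ (H ω).edgeSet}).toReal = p) (v : V) :
    ∫ ω, ((H ω).degree v : ℝ) ∂μ = p * G.degree v := by
  simp_rw [degree_eq_card_filter_adj_of_le (hsub _) v, ← card_neighborFinset_eq_degree]
  exact integral_card_filter_mem (A := fun u => {ω | (H ω).Adj v u}) (fun _ _ => .of_discrete)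
    fun u hu => hedge s(v, u) ((mem_neighborFinset _ _ _).mp hu)

lemma integral_degree_sq (hsub : ∀ ω, H ω ≤ G)
    (hedge : ∀ e ∈ G.edgeSet, (μ {ω | e ∈ (H ω).edgeSet}).toReal = p)
    (hind : iIndepSet (fun e : G.edgeSet => {ω | (e : Sym2 V) ∈ (H ω).edgeSet}) μ) (v : V) :
    ∫ ω, ((H ω).degree v : ℝ) ^ 2 ∂μ = p * (1 - p) * G.degree v + p ^ 2 * G.degree v ^ 2 := by
  simp_rw [degree_eq_card_filter_adj_of_le (hsub _) v, ← card_neighborFinset_eq_degree]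
  refine integral_card_filter_mem_sq (A := fun u => {ω | (H ω).Adj v u}) (fun _ _ => .of_discrete)
    (fun u hu => hedge s(v, u) ((mem_neighborFinset _ _ _).mp hu)) fun u hu w hw huw => ?_
  have hne : (⟨s(v, u), (mem_neighborFinset _ _ _).mp hu⟩ : G.edgeSet)
      ≠ ⟨s(v, w), (mem_neighborFinset _ _ _).mp hw⟩ :=
    fun h => huw (Sym2.congr_right.mp (congrArg Subtype.val h))
  exact hind.measureReal_inter hne

lemma integral_sum_degree (hsub : ∀ ω, H ω ≤ G)
    (hedge : ∀ e ∈ G.edgeSet, (μ {ω | e ∈ (H ω).edgeSet}).toReal = p) :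
    ∫ ω, ∑ v, ((H ω).degree v : ℝ) ∂μ = p * (2 * #G.edgeFinset) := by
  rw [integral_finsetSum _ fun _ _ => .of_finite]
  have hdeg : ∑ v, (G.degree v : ℝ) = 2 * #G.edgeFinset := by
    exact_mod_cast G.sum_degrees_eq_twice_card_edges
  simp_rw [integral_degree hsub hedge, ← mul_sum, hdeg]

lemma integral_sum_degree_sq (hsub : ∀ ω, H ω ≤ G)
    (hedge : ∀ e ∈ G.edgeSet, (μ {ω | e ∈ (H ω).edgeSet}).toReal = p)
    (hind : iIndepSet (fun e : G.edgeSet => {ω | (e : Sym2 V) ∈ (H ω).edgeSet}) μ) :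
    ∫ ω, ∑ v, ((H ω).degree v : ℝ) ^ 2 ∂μ
      = p * (1 - p) * (2 * #G.edgeFinset) + p ^ 2 * ∑ v, (G.degree v : ℝ) ^ 2 := by
  rw [integral_finsetSum _ fun _ _ => .of_finite]
  have hdeg : ∑ v, (G.degree v : ℝ) = 2 * #G.edgeFinset := by
    exact_mod_cast G.sum_degrees_eq_twice_card_edges
  simp_rw [integral_degree_sq hsub hedge hind, sum_add_distrib, ← mul_sum, hdeg]

end RandomSubgraph

theorem variance_uniform_nontrivial_eigenvalue_general {Ω : Type*} [Fintype Ω] [MeasurableSpace Ω]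
    [MeasurableSingletonClass Ω] (μ : Measure Ω) [IsProbabilityMeasure μ]
    {n : ℕ} (G : SimpleGraph (Fin n))
    (p : ℝ)
    (H : Ω → SimpleGraph (Fin n)) (hsub : ∀ ω, H ω ≤ G)
    (hedge : ∀ e ∈ G.edgeSet, (μ {ω | e ∈ (H ω).edgeSet}).toReal = p)
    (hind : iIndepSet (fun e : G.edgeSet => {ω | (e : Sym2 (Fin n)) ∈ (H ω).edgeSet}) μ) :
    (∫ ω, (((n : ℝ) - 1)⁻¹ * ∑ i ∈ Finset.Icc 2 n, (eig ((H ω).lapMatrix ℝ) i) ^ 2) ∂μ)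
      - (∫ ω, (((n : ℝ) - 1)⁻¹ * ∑ i ∈ Finset.Icc 2 n, eig ((H ω).lapMatrix ℝ) i) ∂μ) ^ 2
      = p / ((n : ℝ) - 1) ^ 2 *
        (((n : ℝ) - 1) * (2 * (G.edgeFinset.card : ℝ) * (2 - p)
            + p * ∑ i, (G.degree i : ℝ) ^ 2)
          - 4 * (G.edgeFinset.card : ℝ) ^ 2 * p) := by
  simp_rw [sum_Icc_two_eig_sq_lapMatrix, sum_Icc_two_eig_lapMatrix]
  rw [integral_const_mul, integral_const_mul, integral_add .of_finite .of_finite,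
    integral_sum_degree hsub hedge, integral_sum_degree_sq hsub hedge hind]
  rcases eq_or_ne ((n : ℝ) - 1) 0 with h | h
  · simp [h]
  · field_simp
    ring

/-- If `ℓ` is, conditionally on the random subgraph `H ω` of `G`, uniform over the
`n-1` nontrivial eigenvalues of its Laplacian, then
`Var(ℓ) = E[ℓ²] - E[ℓ]² = p/(n-1)² ⬝ ((n-1)(2m(2-p) + p ∑ dᵢ²) - 4m²p)`. -/
theorem variance_uniform_nontrivial_eigenvalue {Ω : Type*} [Fintype Ω] [MeasurableSpace Ω]
    [MeasurableSingletonClass Ω] (μ : Measure Ω) [IsProbabilityMeasure μ]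
    {n : ℕ} (hn : 2 ≤ n) (G : SimpleGraph (Fin n)) (hG : G.Connected)
    (p : ℝ) (hp0 : 0 < p) (hp1 : p < 1)
    (H : Ω → SimpleGraph (Fin n)) (hsub : ∀ ω, H ω ≤ G)
    (hedge : ∀ e ∈ G.edgeSet, (μ {ω | e ∈ (H ω).edgeSet}).toReal = p)
    (hind : iIndepSet (fun e : G.edgeSet => {ω | (e : Sym2 (Fin n)) ∈ (H ω).edgeSet}) μ) :
    (∫ ω, (((n : ℝ) - 1)⁻¹ * ∑ i ∈ Finset.Icc 2 n, (eig ((H ω).lapMatrix ℝ) i) ^ 2) ∂μ)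
      - (∫ ω, (((n : ℝ) - 1)⁻¹ * ∑ i ∈ Finset.Icc 2 n, eig ((H ω).lapMatrix ℝ) i) ∂μ) ^ 2
      = p / ((n : ℝ) - 1) ^ 2 *
        (((n : ℝ) - 1) * (2 * (G.edgeFinset.card : ℝ) * (2 - p)
            + p * ∑ i, (G.degree i : ℝ) ^ 2)
          - 4 * (G.edgeFinset.card : ℝ) ^ 2 * p) :=
  variance_uniform_nontrivial_eigenvalue_general μ G p H hsub hedge hind
end

section
/- Let \ell_1,...,\ell_N be i.i.d. samples, each uniform over the nontrivial eigenvalues \lambda_2,...,\lambda_n of the Laplacian L of a random graph \hat{G} \in G(G,p), and let \ell_{1:N} = min_j \ell_j. Then E[\ell_{1:N}] \leq E[\lambda_2] (1 - ((n-2)/(n-1))^{N-1}) + (2mp/(n-2)) ((n-2)/(n-1))^N. -/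
open MeasureTheory ProbabilityTheory Finset SimpleGraph
attribute [local instance] Classical.propDecidable

/-!
Fix a realisation of the subgraph and split an index tuple into its first entry and the other
`N - 1`. If one of the others picks `λ₂` (a fraction `1 - ((n-2)/(n-1))^(N-1)` of the tuples),
the minimum is at most `λ₂`; otherwise it is at most the first sample, whose average
`(λ₂ + ⋯ + λₙ)/(n-1)` is at most `tr L/(n-1) = 2|E(Ĝ)|/(n-1)` because `λ₁ ≥ 0`.
Integrating, `E|E(Ĝ)| = mp` by linearity over the edges of `G`.
-/

namespace Matrix

variable {n : ℕ} {A : Matrix (Fin n) (Fin n) ℝ}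

lemma sortedEigs_perm (hA : A.IsHermitian) : (sortedEigs A).Perm (List.ofFn hA.eigenvalues) := by
  rw [← Multiset.coe_eq_coe, sortedEigs, dif_pos hA, Multiset.sort_eq]

lemma length_sortedEigs (hA : A.IsHermitian) : (sortedEigs A).length = n := by
  simpa using (sortedEigs_perm hA).length_eq

lemma eig_nonneg (hA : A.PosSemidef) (i : ℕ) : 0 ≤ eig A i := by
  rw [eig, List.getD_eq_getElem?_getD]
  cases h : (sortedEigs A)[i - 1]? with
  | none => exact le_rfl
  | some x =>
    obtain ⟨j, rfl⟩ := List.mem_ofFn.mp ((sortedEigs_perm hA.1).subset (List.mem_of_getElem? h))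
    exact hA.eigenvalues_nonneg j

lemma sum_eig_eq_trace (hA : A.IsHermitian) : ∑ i : Fin n, eig A (i + 1) = A.trace := by
  have hlen := length_sortedEigs hA
  calc ∑ i : Fin n, eig A (i + 1)
      = ∑ i : Fin (sortedEigs A).length, (sortedEigs A)[(i : ℕ)] :=
        Fintype.sum_equiv (finCongr hlen.symm) _ _ fun i => by
          simp [eig, List.getElem?_eq_getElem (hlen.symm ▸ i.2 : (i : ℕ) < (sortedEigs A).length)]
    _ = (List.ofFn hA.eigenvalues).sum := by
        rw [Fin.sum_univ_getElem, (sortedEigs_perm hA).sum_eq]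
    _ = A.trace := by simp [List.sum_ofFn, hA.trace_eq_sum_eigenvalues]

lemma sum_eig_add_two_le_trace (hA : A.PosSemidef) :
    ∑ k : Fin (n - 1), eig A (k + 2) ≤ A.trace := by
  rcases n with _ | m
  · simp
  · rw [← sum_eig_eq_trace hA.1, Fin.sum_univ_succ]
    simpa using eig_nonneg hA 1

end Matrix

lemma SimpleGraph.trace_lapMatrix_s10 {V : Type*} [Fintype V] [DecidableEq V] (G : SimpleGraph V)
    [DecidableRel G.Adj] : (G.lapMatrix ℝ).trace = 2 * #G.edgeFinset := by
  simp [Matrix.trace, SimpleGraph.lapMatrix, SimpleGraph.degMatrix, ← Nat.cast_sum,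
    SimpleGraph.sum_degrees_eq_twice_card_edges]

section MinOfSamples

variable {ι : Type*} [DecidableEq ι]

lemma iInf_cons_le (lam : ι → ℝ) (i₀ a : ι) {M : ℕ} (g : Fin M → ι) :
    ⨅ j, lam ((Fin.cons a g : Fin (M + 1) → ι) j) ≤ if ∀ i, g i ≠ i₀ then lam a else lam i₀ := by
  have hbdd := (Set.finite_range fun j => lam ((Fin.cons a g : Fin (M + 1) → ι) j)).bddBelow
  split_ifs with h
  · exact ciInf_le hbdd 0
  · obtain ⟨i, hi⟩ : ∃ i, g i = i₀ := by simpa using h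
    simpa [hi] using ciInf_le hbdd i.succ

variable [Fintype ι]

lemma card_filter_forall_ne (i₀ : ι) (M : ℕ) :
    #{g : Fin M → ι | ∀ i, g i ≠ i₀} = (Fintype.card ι - 1) ^ M := by
  have : ({g : Fin M → ι | ∀ i, g i ≠ i₀} : Finset _) = Fintype.piFinset fun _ => univ.erase i₀ := by
    ext g; simp
  simp [this, Fintype.card_piFinset, card_erase_of_mem]

lemma sum_iInf_le (lam : ι → ℝ) (i₀ : ι) (M : ℕ) :
    ∑ f : Fin (M + 1) → ι, ⨅ j, lam (f j)
      ≤ ((Fintype.card ι : ℝ) ^ M - ((Fintype.card ι : ℝ) - 1) ^ M) * (Fintype.card ι * lam i₀)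
        + ((Fintype.card ι : ℝ) - 1) ^ M * ∑ a, lam a := by
  have hK : 1 ≤ Fintype.card ι := Fintype.card_pos_iff.mpr ⟨i₀⟩
  have havoid : (#{g : Fin M → ι | ∀ i, g i ≠ i₀} : ℝ) = ((Fintype.card ι : ℝ) - 1) ^ M := by
    rw [card_filter_forall_ne, Nat.cast_pow, Nat.cast_sub hK, Nat.cast_one]
  have hhit : (#{g : Fin M → ι | ¬ ∀ i, g i ≠ i₀} : ℝ)
      = (Fintype.card ι : ℝ) ^ M - ((Fintype.card ι : ℝ) - 1) ^ M := by
    rw [← havoid, eq_sub_iff_add_eq, ← Nat.cast_add, add_comm, card_filter_add_card_filter_not]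
    simp
  calc ∑ f : Fin (M + 1) → ι, ⨅ j, lam (f j)
      = ∑ x : ι × (Fin M → ι), ⨅ j, lam ((Fin.cons x.1 x.2 : Fin (M + 1) → ι) j) :=
        (Fintype.sum_equiv (Fin.consEquiv fun _ => ι) _ _ fun _ => rfl).symm
    _ ≤ ∑ x : ι × (Fin M → ι), if ∀ i, x.2 i ≠ i₀ then lam x.1 else lam i₀ :=
        sum_le_sum fun x _ => iInf_cons_le lam i₀ x.1 x.2
    _ = ∑ g : Fin M → ι, if ∀ i, g i ≠ i₀ then ∑ a, lam a else Fintype.card ι * lam i₀ := by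
        rw [Fintype.sum_prod_type, sum_comm]
        refine sum_congr rfl fun g _ => ?_
        split_ifs <;> simp
    _ = _ := by
        rw [sum_ite, sum_const, sum_const, nsmul_eq_mul, nsmul_eq_mul, havoid, hhit]
        ring

end MinOfSamples

lemma Matrix.PosSemidef.mean_iInf_eig_le {n : ℕ} (hn : 2 ≤ n) {A : Matrix (Fin n) (Fin n) ℝ}
    (hA : A.PosSemidef) (M : ℕ) :
    ((n : ℝ) - 1)⁻¹ ^ (M + 1) * ∑ f : Fin (M + 1) → Fin (n - 1), ⨅ j, eig A ((f j : ℕ) + 2)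
      ≤ eig A 2 * (1 - (((n : ℝ) - 2) / ((n : ℝ) - 1)) ^ M)
        + A.trace * ((((n : ℝ) - 2) / ((n : ℝ) - 1)) ^ M / ((n : ℝ) - 1)) := by
  have hK : (Fintype.card (Fin (n - 1)) : ℝ) = (n : ℝ) - 1 := by
    rw [Fintype.card_fin, Nat.cast_sub (by omega), Nat.cast_one]
  have hn' : (2 : ℝ) ≤ n := by exact_mod_cast hn
  have hsum := sum_iInf_le (fun a : Fin (n - 1) => eig A ((a : ℕ) + 2)) ⟨0, by omega⟩ M
  rw [hK, show (n : ℝ) - 1 - 1 = (n : ℝ) - 2 by ring] at hsum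
  have htrace : (((n : ℝ) - 2) ^ M) * ∑ a : Fin (n - 1), eig A ((a : ℕ) + 2)
      ≤ ((n : ℝ) - 2) ^ M * A.trace :=
    mul_le_mul_of_nonneg_left (Matrix.sum_eig_add_two_le_trace hA) (pow_nonneg (by linarith) M)
  calc _ ≤ ((n : ℝ) - 1)⁻¹ ^ (M + 1) * ((((n : ℝ) - 1) ^ M - ((n : ℝ) - 2) ^ M)
          * (((n : ℝ) - 1) * eig A 2) + ((n : ℝ) - 2) ^ M * A.trace) :=
        mul_le_mul_of_nonneg_left (by simpa using hsum.trans (by linarith))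
          (pow_nonneg (inv_nonneg.mpr (by linarith)) _)
    _ = _ := by
        have : (n : ℝ) - 1 ≠ 0 := by linarith
        rw [div_pow, inv_pow, pow_succ]
        field_simp

lemma integral_card_edgeFinset {Ω V : Type*} [Finite Ω] [MeasurableSpace Ω]
    [MeasurableSingletonClass Ω] (μ : Measure Ω) [IsFiniteMeasure μ] [Fintype V]
    {G : SimpleGraph V} {H : Ω → SimpleGraph V} (hsub : ∀ ω, H ω ≤ G) :
    ∫ ω, (#(H ω).edgeFinset : ℝ) ∂μ = ∑ e ∈ G.edgeFinset, μ.real {ω | e ∈ (H ω).edgeSet} := by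
  have hcard : ∀ ω, (#(H ω).edgeFinset : ℝ)
      = ∑ e ∈ G.edgeFinset, {ω | e ∈ (H ω).edgeSet}.indicator 1 ω := by
    intro ω
    have : (H ω).edgeFinset = {e ∈ G.edgeFinset | e ∈ (H ω).edgeSet} := by
      ext e
      simpa using fun he => edgeSet_mono (hsub ω) he
    rw [this, natCast_card_filter]
    simp [Set.indicator_apply]
  simp_rw [hcard]
  rw [integral_finsetSum _ fun _ _ => Integrable.of_finite]
  exact sum_congr rfl fun e _ => integral_indicator_one (Set.toFinite _).measurableSet

theorem expected_min_sample_upper_general {Ω : Type*} [Fintype Ω] [MeasurableSpace Ω]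
    [MeasurableSingletonClass Ω] (μ : Measure Ω) [IsProbabilityMeasure μ]
    {n : ℕ} (hn : 3 ≤ n) (G : SimpleGraph (Fin n))
    (p : ℝ)
    (H : Ω → SimpleGraph (Fin n)) (hsub : ∀ ω, H ω ≤ G)
    (hedge : ∀ e ∈ G.edgeSet, (μ {ω | e ∈ (H ω).edgeSet}).toReal = p)
    (N : ℕ) (hN : 1 ≤ N) :
    (∫ ω, ((((n : ℝ) - 1)⁻¹) ^ N *
        ∑ f : Fin N → Fin (n - 1), ⨅ j, eig ((H ω).lapMatrix ℝ) ((f j : ℕ) + 2)) ∂μ)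
      ≤ (∫ ω, eig ((H ω).lapMatrix ℝ) 2 ∂μ)
          * (1 - (((n : ℝ) - 2) / ((n : ℝ) - 1)) ^ (N - 1))
        + (2 * (G.edgeFinset.card : ℝ) * p / ((n : ℝ) - 2))
          * (((n : ℝ) - 2) / ((n : ℝ) - 1)) ^ N := by
  obtain ⟨M, rfl⟩ : ∃ M, N = M + 1 := ⟨N - 1, by omega⟩
  set r := ((n : ℝ) - 2) / ((n : ℝ) - 1)
  have hmean : ∀ ω, ((n : ℝ) - 1)⁻¹ ^ (M + 1)
        * ∑ f : Fin (M + 1) → Fin (n - 1), ⨅ j, eig ((H ω).lapMatrix ℝ) ((f j : ℕ) + 2)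
      ≤ eig ((H ω).lapMatrix ℝ) 2 * (1 - r ^ M)
        + #(H ω).edgeFinset * (2 * (r ^ M / ((n : ℝ) - 1))) := fun ω => by
    have := (posSemidef_lapMatrix ℝ (H ω)).mean_iInf_eig_le (by omega) M
    rw [trace_lapMatrix_s10] at this
    exact this.trans_eq (by ring)
  have hedges : ∫ ω, (#(H ω).edgeFinset : ℝ) ∂μ = #G.edgeFinset * p := by
    rw [integral_card_edgeFinset μ hsub,
      sum_congr rfl fun e he => (measureReal_def _ _).trans (hedge e (mem_edgeFinset.mp he)),
      sum_const, nsmul_eq_mul]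
  calc _ ≤ ∫ ω, (eig ((H ω).lapMatrix ℝ) 2 * (1 - r ^ M)
          + #(H ω).edgeFinset * (2 * (r ^ M / ((n : ℝ) - 1)))) ∂μ :=
        integral_mono Integrable.of_finite Integrable.of_finite hmean
    _ = (∫ ω, eig ((H ω).lapMatrix ℝ) 2 ∂μ) * (1 - r ^ M)
          + #G.edgeFinset * p * (2 * (r ^ M / ((n : ℝ) - 1))) := by
        rw [integral_add Integrable.of_finite Integrable.of_finite, integral_mul_const,
          integral_mul_const, hedges]
    _ = _ := by
        have hn' : (3 : ℝ) ≤ n := by exact_mod_cast hn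
        have : (n : ℝ) - 2 ≠ 0 := by linarith
        have : (n : ℝ) - 1 ≠ 0 := by linarith
        rw [Nat.add_sub_cancel, pow_succ]
        simp only [r]
        field_simp

/-- Let `ℓ₁,…,ℓ_N` be i.i.d. samples, each (conditionally on the random subgraph
`H ω` of `G`) uniform over the nontrivial Laplacian eigenvalues `λ₂,…,λ_n`, and let
`ℓ_{1:N}` be their minimum.  Averaging over the `(n-1)^N` equally likely index choices
`f : Fin N → Fin (n-1)` and over `ω`,
`E[ℓ_{1:N}] ≤ E[λ₂](1 - ((n-2)/(n-1))^{N-1}) + (2mp/(n-2))((n-2)/(n-1))^N`. -/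
theorem expected_min_sample_upper {Ω : Type*} [Fintype Ω] [MeasurableSpace Ω]
    [MeasurableSingletonClass Ω] (μ : Measure Ω) [IsProbabilityMeasure μ]
    {n : ℕ} (hn : 3 ≤ n) (G : SimpleGraph (Fin n)) (hG : G.Connected)
    (p : ℝ) (hp0 : 0 < p) (hp1 : p < 1)
    (H : Ω → SimpleGraph (Fin n)) (hsub : ∀ ω, H ω ≤ G)
    (hedge : ∀ e ∈ G.edgeSet, (μ {ω | e ∈ (H ω).edgeSet}).toReal = p)
    (hind : iIndepSet (fun e : G.edgeSet => {ω | (e : Sym2 (Fin n)) ∈ (H ω).edgeSet}) μ)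
    (N : ℕ) (hN : 1 ≤ N) :
    (∫ ω, ((((n : ℝ) - 1)⁻¹) ^ N *
        ∑ f : Fin N → Fin (n - 1), ⨅ j, eig ((H ω).lapMatrix ℝ) ((f j : ℕ) + 2)) ∂μ)
      ≤ (∫ ω, eig ((H ω).lapMatrix ℝ) 2 ∂μ)
          * (1 - (((n : ℝ) - 2) / ((n : ℝ) - 1)) ^ (N - 1))
        + (2 * (G.edgeFinset.card : ℝ) * p / ((n : ℝ) - 2))
          * (((n : ℝ) - 2) / ((n : ℝ) - 1)) ^ N :=
  expected_min_sample_upper_general μ hn G p H hsub hedge N hN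
end

section
/- For a random graph \hat{G} \in G(K_n, p) (classical Erdős–Rényi) with Laplacian L, P(\lambda_2(L) > 0) \geq max_{N \in \mathbb{N}} [ max{0, \sqrt{n(n-1)p} R(N,n) - \sqrt{2(n-1)(1-p)(N-1)} } ]^2 / [ (n-1) R(N,n)^2 (2 - 2p + np) ]. -/
/-!
If every vertex `v ≠ 0` of a graph on `Fin n` has a neighbour `u < v`, the graph is connected;
its Laplacian then has a one-dimensional kernel, so `λ₂ > 0`. In `G(K_n, p)` vertex `v` has no
smaller neighbour with probability `(1 - p) ^ v`, and a union bound gives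
`P(λ₂ > 0) ≥ 1 - ∑_{v ≥ 1} (1 - p) ^ v ≥ 1 - (1 - p) / p`.

The stated bound never exceeds `max 0 (1 - (1 - p) / p)`. Write it as `(A - B)² / (A² + E)` with
`A² = n(n-1)pR²`, `B² = 2(n-1)(1-p)(N-1)`, `E = 2(1-p)(n-1)R²`. By Bernoulli `(n-1)R ≤ N-1`,
and when `B < A` this forces `(1-p)(A² + E) ≤ p(B² + E)`, which together with
`(A - B)² ≤ A² - B²` is the claim.
-/

open MeasureTheory ProbabilityTheory Finset SimpleGraph
attribute [local instance] Classical.propDecidable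

theorem List.lt_getD_one_of_count_le_one {α : Type*} [LinearOrder α] {l : List α} {a : α}
    (d : α) (hsort : l.Pairwise (· ≤ ·)) (hge : ∀ x ∈ l, a ≤ x) (hcount : l.count a ≤ 1)
    (hlen : 2 ≤ l.length) : a < l.getD 1 d := by
  match l, hlen with
  | b :: c :: t, _ =>
    have hbc : b ≤ c := List.rel_of_pairwise_cons hsort (by simp)
    have hb : a ≤ b := hge b (by simp)
    show a < c
    refine lt_of_le_of_ne (hge c (by simp)) fun hc => ?_
    have : b = a := le_antisymm (hc ▸ hbc) hb
    subst this hc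
    simp at hcount

theorem Matrix.IsHermitian.card_eigenvalues_eq_zero {𝕜 n : Type*} [RCLike 𝕜] [Fintype n]
    [DecidableEq n] {A : Matrix n n 𝕜} (hA : A.IsHermitian) :
    #{i | hA.eigenvalues i = 0} = Module.finrank 𝕜 (LinearMap.ker A.toLin') := by
  have hrank := hA.rank_eq_card_non_zero_eigs
  have hnullity := A.toLin'.finrank_range_add_finrank_ker
  rw [Matrix.toLin'_apply', ← Matrix.rank, hrank, Fintype.card_subtype] at hnullity
  have hsplit := card_filter_add_card_filter_not (s := univ) (p := fun i => hA.eigenvalues i = 0)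
  simp only [Module.finrank_fintype_fun_eq_card, card_univ, ne_eq] at hnullity hsplit
  rw [Matrix.toLin'_apply']
  omega

theorem eig_two_pos_of_posSemidef {n : ℕ} (hn : 2 ≤ n) {A : Matrix (Fin n) (Fin n) ℝ}
    (hA : A.PosSemidef) (hker : Module.finrank ℝ (LinearMap.ker A.toLin') ≤ 1) :
    0 < eig A 2 := by
  rw [eig, sortedEigs, dif_pos hA.1]
  apply List.lt_getD_one_of_count_le_one 0 (Multiset.pairwise_sort _ _)
  · intro x hx
    rw [Multiset.mem_sort, Multiset.mem_coe, List.mem_ofFn] at hx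
    obtain ⟨i, rfl⟩ := hx
    exact hA.eigenvalues_nonneg i
  · rw [← Multiset.coe_count, Multiset.sort_eq, ← Fin.univ_val_map, Multiset.count_map]
    refine le_of_eq_of_le ?_ (hA.1.card_eigenvalues_eq_zero.trans_le hker)
    simp only [eq_comm]; rfl
  · simpa using hn

theorem SimpleGraph.Preconnected.eig_two_lapMatrix_pos {n : ℕ} (hn : 2 ≤ n)
    {G : SimpleGraph (Fin n)} (hG : G.Preconnected) : 0 < eig (G.lapMatrix ℝ) 2 := by
  refine eig_two_pos_of_posSemidef hn (posSemidef_lapMatrix ℝ G) ?_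
  rw [← card_connectedComponent_eq_finrank_ker_toLin'_lapMatrix]
  exact Fintype.card_le_one_iff_subsingleton.2 hG.subsingleton_connectedComponent

theorem SimpleGraph.preconnected_of_forall_exists_lt_adj {V : Type*} [Preorder V]
    [WellFoundedLT V] [OrderBot V] {G : SimpleGraph V}
    (h : ∀ v ≠ ⊥, ∃ u < v, G.Adj u v) : G.Preconnected := by
  have hroot (v : V) : G.Reachable ⊥ v := by
    induction v using WellFoundedLT.induction with
    | _ v ih =>
      by_cases hv : v = ⊥
      · exact hv ▸ .refl _
      · obtain ⟨u, huv, hadj⟩ := h v hv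
        exact (ih u huv).trans hadj.reachable
  exact fun u v => (hroot u).symm.trans (hroot v)

section Probability

variable {Ω ι : Type*} [MeasurableSpace Ω] {μ : Measure Ω} [IsProbabilityMeasure μ]

theorem ProbabilityTheory.iIndepSet.measureReal_iInter_compl [Fintype ι] {s : ι → Set Ω}
    {p : ℝ} (h : iIndepSet s μ) (hs : ∀ i, MeasurableSet (s i)) (hp : ∀ i, μ.real (s i) = p) :
    μ.real (⋂ i, (s i)ᶜ) = (1 - p) ^ Fintype.card ι := by
  have hprod := (iIndepSet_iff s μ).1 h univ (f := fun i => (s i)ᶜ)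
    fun i _ => (MeasurableSpace.measurableSet_generateFrom (Set.mem_singleton _)).compl
  simp only [mem_univ, Set.iInter_true] at hprod
  rw [Measure.real_def, hprod, ENNReal.toReal_prod]
  simp only [← Measure.real_def, probReal_compl_eq_one_sub (hs _), hp, prod_const, card_univ]

theorem measureReal_forall_lt_not_adj {n : ℕ} {p : ℝ} (H : Ω → SimpleGraph (Fin n))
    (hmeas : ∀ e, MeasurableSet {ω | e ∈ (H ω).edgeSet})
    (hedge : ∀ e ∈ (⊤ : SimpleGraph (Fin n)).edgeSet, μ.real {ω | e ∈ (H ω).edgeSet} = p)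
    (hind : iIndepSet
      (fun e : (⊤ : SimpleGraph (Fin n)).edgeSet =>
        {ω | (e : Sym2 (Fin n)) ∈ (H ω).edgeSet}) μ) (v : Fin n) :
    μ.real {ω | ∀ u < v, ¬ (H ω).Adj u v} = (1 - p) ^ (v : ℕ) := by
  let edgeTo : {u // u < v} → (⊤ : SimpleGraph (Fin n)).edgeSet :=
    fun u => ⟨s(u, v), (top_adj _ _).2 u.2.ne⟩
  have hinj : Function.Injective edgeTo := fun a b hab =>
    Subtype.ext (Sym2.congr_left.1 (congrArg Subtype.val hab))
  have hset : {ω | ∀ u < v, ¬ (H ω).Adj u v}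
      = ⋂ u : {u // u < v}, {ω | (edgeTo u : Sym2 (Fin n)) ∈ (H ω).edgeSet}ᶜ := by
    ext ω; simp [edgeTo]
  rw [hset]
  refine ((hind.precomp hinj).measureReal_iInter_compl (fun _ => hmeas _)
    fun u => hedge _ (edgeTo u).2).trans ?_
  rw [Fintype.card_subtype, filter_gt_eq_Iio, Fin.card_Iio]

theorem one_sub_div_le_measureReal_preconnected {m : ℕ} {p : ℝ} (hp0 : 0 < p) (hp1 : p ≤ 1)
    (H : Ω → SimpleGraph (Fin (m + 1)))
    (hmeas : ∀ e, MeasurableSet {ω | e ∈ (H ω).edgeSet})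
    (hedge : ∀ e ∈ (⊤ : SimpleGraph (Fin (m + 1))).edgeSet,
      μ.real {ω | e ∈ (H ω).edgeSet} = p)
    (hind : iIndepSet
      (fun e : (⊤ : SimpleGraph (Fin (m + 1))).edgeSet =>
        {ω | (e : Sym2 (Fin (m + 1))) ∈ (H ω).edgeSet}) μ) :
    1 - (1 - p) / p ≤ μ.real {ω | (H ω).Preconnected} := by
  set bad := ⋃ i : Fin m, {ω | ∀ u < i.succ, ¬ (H ω).Adj u i.succ}
  have hgood : badᶜ ⊆ {ω | (H ω).Preconnected} := by
    intro ω hω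
    refine preconnected_of_forall_exists_lt_adj fun v hv => ?_
    obtain ⟨i, rfl⟩ := Fin.exists_succ_eq.2 hv
    simp only [bad, Set.mem_compl_iff, Set.mem_iUnion, not_exists] at hω
    simpa using hω i
  have hbad : μ.real bad ≤ (1 - p) / p := calc
    μ.real bad ≤ ∑ i : Fin m, (1 - p) ^ (i + 1 : ℕ) := by
      refine (measureReal_iUnion_fintype_le _).trans_eq (sum_congr rfl fun i _ => ?_)
      rw [measureReal_forall_lt_not_adj H hmeas hedge hind, Fin.val_succ]
    _ = (1 - p) * ∑ i ∈ range m, (1 - p) ^ i := by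
      rw [Fin.sum_univ_eq_sum_range (fun i => (1 - p) ^ (i + 1)), mul_sum]
      simp only [pow_succ, mul_comm]
    _ ≤ (1 - p) * (1 / p) := by
      gcongr
      simpa using geom_sum_Ico_le_of_lt_one (m := 0) (n := m) (sub_nonneg.2 hp1) (by linarith)
    _ = (1 - p) / p := by ring
  have hsplit : 1 ≤ μ.real bad + μ.real badᶜ := by
    simpa [Set.union_compl_self] using measureReal_union_le (μ := μ) bad badᶜ
  linarith [measureReal_mono (μ := μ) hgood]

end Probability

theorem sq_sub_div_le_one_sub_div {A B E p q : ℝ} (hB : 0 ≤ B) (hBA : B < A) (hE : 0 ≤ E)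
    (hp : 0 < p) (h : q * (A ^ 2 + E) ≤ p * (B ^ 2 + E)) :
    (A - B) ^ 2 / (A ^ 2 + E) ≤ 1 - q / p := by
  have hD : 0 < A ^ 2 + E := by nlinarith
  have hq : q / p ≤ (B ^ 2 + E) / (A ^ 2 + E) := (div_le_div_iff₀ hp hD).2 (by linarith)
  calc (A - B) ^ 2 / (A ^ 2 + E) ≤ (A ^ 2 - B ^ 2) / (A ^ 2 + E) := by
        gcongr; nlinarith
    _ = 1 - (B ^ 2 + E) / (A ^ 2 + E) := by field_simp; ring
    _ ≤ 1 - q / p := by linarith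

theorem one_sub_pow_le_mul_one_sub {x : ℝ} (hx : 0 ≤ x) (k : ℕ) : 1 - x ^ k ≤ k * (1 - x) := by
  have := one_add_mul_le_pow (a := x - 1) (by linarith) k
  simp only [add_sub_cancel] at this
  linarith

theorem one_sub_mul_add_le_mul_add_of_lt {c p R M : ℝ} (hc : 2 ≤ c) (hp0 : 0 < p) (hp1 : p ≤ 1)
    (hR0 : 0 ≤ R) (hR1 : R ≤ 1) (hRM : R * (c - 1) ≤ M)
    (hlt : 2 * (c - 1) * (1 - p) * M < c * (c - 1) * p * R ^ 2) :
    (1 - p) * (c * (c - 1) * p * R ^ 2 + 2 * (1 - p) * (c - 1) * R ^ 2)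
      ≤ p * (2 * (c - 1) * (1 - p) * M + 2 * (1 - p) * (c - 1) * R ^ 2) := by
  set q := 1 - p
  have hq : 0 ≤ q := by linarith
  have hR2 : R ^ 2 ≤ R := by nlinarith
  have hR2M : R ^ 2 * (c - 1) ≤ M := by nlinarith
  have hqM : 2 * q * M < c * p * R ^ 2 := by nlinarith
  have hqc : 2 * q ≤ c * p := by
    have hR : 0 < R ^ 2 := by
      have hM : 0 ≤ 2 * q * M := mul_nonneg (by linarith) (by nlinarith)
      exact pos_of_mul_pos_right (hM.trans_lt hqM) (mul_pos (by linarith) hp0).le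
    have : 2 * q * (c - 1) < c * p := by nlinarith
    nlinarith
  have hkey : R ^ 2 * ((c - 2) * p + 2 * q) ≤ 2 * p * M := by nlinarith
  nlinarith [mul_nonneg hq (by linarith : (0 : ℝ) ≤ c - 1)]

theorem sq_max_sub_div_le {c p : ℝ} (hc : 2 ≤ c) (hp0 : 0 < p) (hp1 : p ≤ 1) {N : ℕ}
    (hN : 1 ≤ N) :
    (max 0 (Real.sqrt (c * (c - 1) * p) * (1 - ((c - 2) / (c - 1)) ^ (N - 1))
        - Real.sqrt (2 * (c - 1) * (1 - p) * ((N : ℝ) - 1)))) ^ 2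
      / ((c - 1) * (1 - ((c - 2) / (c - 1)) ^ (N - 1)) ^ 2 * (2 - 2 * p + c * p))
      ≤ max 0 (1 - (1 - p) / p) := by
  set x := (c - 2) / (c - 1)
  set R := 1 - x ^ (N - 1)
  set A := Real.sqrt (c * (c - 1) * p) * R
  set B := Real.sqrt (2 * (c - 1) * (1 - p) * ((N : ℝ) - 1))
  rcases le_or_gt (A - B) 0 with hAB | hAB
  · simp [max_eq_left hAB]
  have hc1 : 0 < c - 1 := by linarith
  have hx0 : 0 ≤ x := div_nonneg (by linarith) hc1.le
  have hx1 : 1 - x = 1 / (c - 1) := by simp only [x]; field_simp; ring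
  have hRM : R * (c - 1) ≤ ((N : ℝ) - 1) := by
    have := one_sub_pow_le_mul_one_sub hx0 (N - 1)
    rw [hx1, Nat.cast_sub hN, Nat.cast_one] at this
    calc R * (c - 1) ≤ ((N : ℝ) - 1) * (1 / (c - 1)) * (c - 1) := by gcongr
      _ = (N : ℝ) - 1 := by field_simp [hc1.ne']
  have hA2 : A ^ 2 = c * (c - 1) * p * R ^ 2 := by
    rw [mul_pow, Real.sq_sqrt (mul_nonneg (mul_nonneg (by linarith) hc1.le) hp0.le)]
  have hB2 : B ^ 2 = 2 * (c - 1) * (1 - p) * ((N : ℝ) - 1) := Real.sq_sqrt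
    (mul_nonneg (mul_nonneg (mul_nonneg zero_le_two hc1.le) (by linarith)) (by simpa using hN))
  have hR0 : 0 ≤ R := sub_nonneg.2 (pow_le_one₀ hx0 ((div_le_one hc1).2 (by linarith)))
  have hR1 : R ≤ 1 := sub_le_self _ (pow_nonneg hx0 _)
  have hB0 : 0 ≤ B := Real.sqrt_nonneg _
  have hD : (c - 1) * R ^ 2 * (2 - 2 * p + c * p) = A ^ 2 + 2 * (1 - p) * (c - 1) * R ^ 2 := by
    rw [hA2]; ring
  rw [max_eq_right hAB.le, hD]
  refine le_max_of_le_right (sq_sub_div_le_one_sub_div hB0 (by linarith) ?_ hp0 ?_)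
  · exact mul_nonneg (mul_nonneg (mul_nonneg zero_le_two (by linarith)) hc1.le) (sq_nonneg R)
  rw [hA2, hB2]
  refine one_sub_mul_add_le_mul_add_of_lt hc hp0 hp1 hR0 hR1 hRM ?_
  rw [← hA2, ← hB2]
  nlinarith

/-- Theorem 5.1: for a classical Erdős–Rényi random graph (random subgraph of the
complete graph `K_n`, each edge independently present with probability `p`) with
Laplacian `L` and `R(N,n) = 1 - ((n-2)/(n-1))^{N-1}`, for every `N ∈ ℕ`
(hence for the max over `N`),
`P(λ₂(L) > 0) ≥ (max{0, √(n(n-1)p) R(N,n) - √(2(n-1)(1-p)(N-1))})²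
  / ((n-1)R(N,n)²(2 - 2p + np))`. -/
theorem prob_connected_lower_complete {Ω : Type*} [Fintype Ω] [MeasurableSpace Ω]
    [MeasurableSingletonClass Ω] (μ : Measure Ω) [IsProbabilityMeasure μ]
    {n : ℕ} (hn : 3 ≤ n)
    (p : ℝ) (hp0 : 0 < p) (hp1 : p < 1)
    (H : Ω → SimpleGraph (Fin n))
    (hedge : ∀ e ∈ (⊤ : SimpleGraph (Fin n)).edgeSet,
      (μ {ω | e ∈ (H ω).edgeSet}).toReal = p)
    (hind : iIndepSet
      (fun e : (⊤ : SimpleGraph (Fin n)).edgeSet =>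
        {ω | (e : Sym2 (Fin n)) ∈ (H ω).edgeSet}) μ) :
    ∀ N : ℕ, 1 ≤ N →
      (μ {ω | 0 < eig ((H ω).lapMatrix ℝ) 2}).toReal
        ≥ (max 0 (Real.sqrt ((n : ℝ) * ((n : ℝ) - 1) * p)
              * (1 - (((n : ℝ) - 2) / ((n : ℝ) - 1)) ^ (N - 1))
            - Real.sqrt (2 * ((n : ℝ) - 1) * (1 - p) * ((N : ℝ) - 1)))) ^ 2
          / (((n : ℝ) - 1) * (1 - (((n : ℝ) - 2) / ((n : ℝ) - 1)) ^ (N - 1)) ^ 2 *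
            (2 - 2 * p + (n : ℝ) * p)) := by
  intro N hN
  obtain ⟨m, rfl⟩ : ∃ m, n = m + 1 := ⟨n - 1, by omega⟩
  have hc : (2 : ℝ) ≤ ((m + 1 : ℕ) : ℝ) := by exact_mod_cast (by omega : 2 ≤ m + 1)
  have hconn := one_sub_div_le_measureReal_preconnected (μ := μ) hp0 hp1.le H
    (fun _ => .of_discrete) hedge hind
  calc _ ≤ max 0 (1 - (1 - p) / p) := sq_max_sub_div_le hc hp0 hp1.le hN
    _ ≤ μ.real {ω | (H ω).Preconnected} := max_le measureReal_nonneg hconn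
    _ ≤ _ := measureReal_mono fun ω hω => hω.eig_two_lapMatrix_pos (by omega)
end
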